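/- arXiv:2103.08277 — 2 statements merged into one kernel-verified Lean document; each statement's English description precedes it below -/
import Mathlib

section
/- Every bounded Borel-measurable sigmoidal function with limits (0, C), C ≠ 0, is discriminatory with respect to the MPS feature class: let σ : ℝ → ℝ be bounded and Borel measurable with σ(t) → 0 as t → −∞ and σ(t) → C as t → +∞, where C ≠ 0, and let μ be a finite signed regular Borel measure on [0,1]ⁿ. If ∫_{[0,1]ⁿ} σ(λ·p(x) + η) dμ(x) = 0 for every multilinear polynomial p on ℝⁿ and all λ, η ∈ ℝ, then μ = 0. -/
/-!
Linear functionals are multilinear polynomials, so for every continuous linear functional `L`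
the two Jordan parts of `μ`, restricted to the cube, give the same integrals of
`σ (a * L x + b)`. Pushing forward along `L` reduces this to two finite measures on `ℝ`.
There, as `k → ∞`, `σ (k * (x - t) + φ)` tends to `C` on `(t, ∞)`, to `σ φ` at `t` and to `0`
below `t`; by dominated convergence `C μ(t, ∞) + σ(φ) μ{t}` is the same for both measures, and
two values of `φ` with `σ φ` distinct separate the two terms. So the pushforwards agree on
every `[t, ∞)`, the Cramér–Wold device (characteristic functions) identifies the restricted
parts, and since `μ` vanishes off the cube, `μ = 0`.
-/

open MeasureTheory

/-- A multilinear polynomial on `ℝⁿ`: `p(x) = Σ_{s ∈ {0,1}ⁿ} W_s ∏_{i : s i = 1} xᵢ`.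
These are exactly the contractions of an MPS whose site kernel maps are
`φ(xᵢ) = (xᵢ, 1)`. -/
def IsMultilinearPoly {n : ℕ} (p : (Fin n → ℝ) → ℝ) : Prop :=
  ∃ W : (Fin n → Bool) → ℝ,
    ∀ x : Fin n → ℝ,
      p x = ∑ s : Fin n → Bool, W s * ∏ i : Fin n, if s i then x i else 1

open Filter Set Topology

theorem LinearMap.isMultilinearPoly {n : ℕ} (L : (Fin n → ℝ) →ₗ[ℝ] ℝ) :
    IsMultilinearPoly L := by
  classical
  refine ⟨fun s => ∑ i, if s = Pi.single i true then L (Pi.single i 1) else 0, fun x => ?_⟩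
  have monomial_single (i : Fin n) :
      (∏ j, if (Pi.single i true : Fin n → Bool) j then x j else 1) = x i := by
    rw [Finset.prod_eq_single i] <;> simp +contextual
  simp_rw [Finset.sum_mul, ite_mul, zero_mul]
  rw [Finset.sum_comm, L.pi_apply_eq_sum_univ x]
  refine Finset.sum_congr rfl fun i _ => ?_
  rw [Finset.sum_ite_eq', if_pos (Finset.mem_univ _), monomial_single, smul_eq_mul, mul_comm]
  congr 2
  ext j
  simp [Pi.single_apply, eq_comm]

theorem exists_apply_ne_of_tendsto {α β : Type*} [TopologicalSpace β] [T2Space β]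
    {f : α → β} {l₁ l₂ : Filter α} [l₁.NeBot] [l₂.NeBot] {b₁ b₂ : β} (hb : b₁ ≠ b₂)
    (h₁ : Tendsto f l₁ (𝓝 b₁)) (h₂ : Tendsto f l₂ (𝓝 b₂)) : ∃ x y, f x ≠ f y := by
  by_contra! hconst
  obtain ⟨x⟩ := l₁.nonempty_of_neBot
  have hf : f = fun _ => f x := funext fun y => hconst y x
  rw [hf] at h₁ h₂
  exact hb ((tendsto_nhds_unique tendsto_const_nhds h₁).symm.trans
    (tendsto_nhds_unique tendsto_const_nhds h₂))

section Sigmoid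

variable {σ : ℝ → ℝ} {C : ℝ}

theorem tendsto_sigmoid_scale (hbot : Tendsto σ atBot (𝓝 0)) (htop : Tendsto σ atTop (𝓝 C))
    (t φ x : ℝ) :
    Tendsto (fun k : ℕ => σ (k * (x - t) + φ)) atTop
      (𝓝 ((Ioi t).indicator (fun _ => C) x + ({t} : Set ℝ).indicator (fun _ => σ φ) x)) := by
  rcases lt_trichotomy x t with hlt | rfl | hgt
  · have hx : x ∉ Ioi t := not_lt.mpr hlt.le
    have hx' : x ∉ ({t} : Set ℝ) := hlt.ne
    rw [indicator_of_notMem hx, indicator_of_notMem hx', add_zero]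
    exact hbot.comp <| tendsto_atBot_add_const_right _ φ <|
      tendsto_natCast_atTop_atTop.atTop_mul_const_of_neg (sub_neg.mpr hlt)
  · simp
  · have hx' : x ∉ ({t} : Set ℝ) := hgt.ne'
    rw [indicator_of_mem (show x ∈ Ioi t from hgt), indicator_of_notMem hx', add_zero]
    exact htop.comp <| tendsto_atTop_add_const_right _ φ <|
      tendsto_natCast_atTop_atTop.atTop_mul_const (sub_pos.mpr hgt)

theorem tendsto_integral_sigmoid_scale (hσm : Measurable σ) {M : ℝ} (hM : ∀ t, |σ t| ≤ M)
    (hbot : Tendsto σ atBot (𝓝 0)) (htop : Tendsto σ atTop (𝓝 C))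
    (μ : Measure ℝ) [IsFiniteMeasure μ] (t φ : ℝ) :
    Tendsto (fun k : ℕ => ∫ x, σ (k * (x - t) + φ) ∂μ) atTop
      (𝓝 (C * μ.real (Ioi t) + σ φ * μ.real {t})) := by
  have hlim := tendsto_integral_of_dominated_convergence (μ := μ) (fun _ => M)
    (fun _ => Measurable.aestronglyMeasurable (by fun_prop)) (integrable_const M) (fun _ => ae_of_all _ fun _ => hM _)
    (ae_of_all _ (tendsto_sigmoid_scale hbot htop t φ))
  rwa [integral_add ((integrable_const C).indicator measurableSet_Ioi)
      ((integrable_const (σ φ)).indicator (measurableSet_singleton t)),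
    integral_indicator_const _ measurableSet_Ioi,
    integral_indicator_const _ (measurableSet_singleton t), smul_eq_mul, smul_eq_mul,
    mul_comm, mul_comm (μ.real _)] at hlim

namespace MeasureTheory.Measure

theorem ext_of_integral_sigmoid_eq (hσm : Measurable σ) {M : ℝ} (hM : ∀ t, |σ t| ≤ M)
    (hC : C ≠ 0) (hbot : Tendsto σ atBot (𝓝 0)) (htop : Tendsto σ atTop (𝓝 C))
    {μ ν : Measure ℝ} [IsFiniteMeasure μ] [IsFiniteMeasure ν]
    (h : ∀ a b : ℝ, ∫ x, σ (a * x + b) ∂μ = ∫ x, σ (a * x + b) ∂ν) : μ = ν := by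
  have hlim (t φ : ℝ) :
      C * μ.real (Ioi t) + σ φ * μ.real {t} = C * ν.real (Ioi t) + σ φ * ν.real {t} := by
    refine tendsto_nhds_unique (tendsto_integral_sigmoid_scale hσm hM hbot htop μ t φ) ?_
    convert tendsto_integral_sigmoid_scale hσm hM hbot htop ν t φ using 2 with k
    convert h k (φ - k * t) using 3 <;> ring_nf
  obtain ⟨φ₁, φ₂, hne⟩ := exists_apply_ne_of_tendsto hC.symm hbot htop
  refine ext_of_Ici μ ν fun t => ?_
  have hatom : μ.real {t} = ν.real {t} := by
    have hprod : (σ φ₁ - σ φ₂) * (μ.real {t} - ν.real {t}) = 0 := by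
      linear_combination hlim t φ₁ - hlim t φ₂
    exact sub_eq_zero.mp ((mul_eq_zero.mp hprod).resolve_left (sub_ne_zero.mpr hne))
  have hIoi : μ.real (Ioi t) = ν.real (Ioi t) := by
    have := hlim t φ₁
    rw [hatom] at this
    exact mul_left_cancel₀ hC (add_right_cancel this)
  rw [← measureReal_eq_measureReal_iff, ← Ioi_union_left,
    measureReal_union (by simp) (measurableSet_singleton t),
    measureReal_union (by simp) (measurableSet_singleton t), hIoi, hatom]

variable {E : Type*} [NormedAddCommGroup E] [NormedSpace ℝ E] [CompleteSpace E]
  [SecondCountableTopology E] [MeasurableSpace E] [BorelSpace E]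
  {μ ν : Measure E} [IsFiniteMeasure μ] [IsFiniteMeasure ν]

theorem ext_of_map_strongDual (h : ∀ L : StrongDual ℝ E, μ.map L = ν.map L) : μ = ν :=
  ext_of_charFunDual <| funext fun L => by
    rw [charFunDual_eq_charFun_map_one, charFunDual_eq_charFun_map_one, h L]

theorem ext_of_integral_sigmoid_strongDual_eq (hσm : Measurable σ) {M : ℝ}
    (hM : ∀ t, |σ t| ≤ M) (hC : C ≠ 0) (hbot : Tendsto σ atBot (𝓝 0))
    (htop : Tendsto σ atTop (𝓝 C))
    (h : ∀ (L : StrongDual ℝ E) (a b : ℝ),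
      ∫ x, σ (a * L x + b) ∂μ = ∫ x, σ (a * L x + b) ∂ν) :
    μ = ν := by
  refine ext_of_map_strongDual fun L => ?_
  refine ext_of_integral_sigmoid_eq hσm hM hC hbot htop fun a b => ?_
  have hσL : Measurable fun y : ℝ => σ (a * y + b) := by fun_prop
  rw [integral_map L.measurable.aemeasurable hσL.aestronglyMeasurable,
    integral_map L.measurable.aemeasurable hσL.aestronglyMeasurable]
  exact h L a b

end MeasureTheory.Measure

end Sigmoid

theorem MeasureTheory.SignedMeasure.eq_zero_of_restrict_posPart_eq_negPart {α : Type*}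
    [MeasurableSpace α] {μ : SignedMeasure α} {s : Set α} (hs : MeasurableSet s)
    (hcompl : ∀ A, MeasurableSet A → A ⊆ sᶜ → μ A = 0)
    (h : μ.toJordanDecomposition.posPart.restrict s =
      μ.toJordanDecomposition.negPart.restrict s) :
    μ = 0 := by
  have hPN : μ.toJordanDecomposition.posPart = μ.toJordanDecomposition.negPart := by
    ext A hA
    have hout : μ.toJordanDecomposition.posPart (A \ s) =
        μ.toJordanDecomposition.negPart (A \ s) := by
      have := μ.apply_eq_posPart_real_sub_negPart_real (hA.diff hs)
      rw [hcompl _ (hA.diff hs) fun x hx => hx.2, eq_comm, sub_eq_zero] at this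
      exact (measureReal_eq_measureReal_iff).mp this
    rw [← measure_inter_add_sdiff A hs, ← measure_inter_add_sdiff A hs,
      ← Measure.restrict_apply hA, ← Measure.restrict_apply hA, h, hout]
  ext A hA
  rw [μ.apply_eq_posPart_real_sub_negPart_real hA, hPN, sub_self, zero_apply]

theorem measurable_sigmoidal_discriminatory_general (n : ℕ) (σ : ℝ → ℝ)
    (hσm : Measurable σ) (hσb : ∃ M, ∀ t, |σ t| ≤ M) (C : ℝ) (hC : C ≠ 0)
    (hbot : Filter.Tendsto σ Filter.atBot (nhds 0))
    (htop : Filter.Tendsto σ Filter.atTop (nhds C))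
    (μ : SignedMeasure (Fin n → ℝ))
    (hsupp : ∀ A : Set (Fin n → ℝ), MeasurableSet A →
      A ⊆ (Set.Icc (0 : Fin n → ℝ) 1)ᶜ → μ A = 0)
    (hint : ∀ p : (Fin n → ℝ) → ℝ, IsMultilinearPoly p → ∀ lam eta : ℝ,
      (∫ x in Set.Icc (0 : Fin n → ℝ) 1, σ (lam * p x + eta)
          ∂μ.toJordanDecomposition.posPart)
        - (∫ x in Set.Icc (0 : Fin n → ℝ) 1, σ (lam * p x + eta)
          ∂μ.toJordanDecomposition.negPart) = 0) :
    μ = 0 := by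
  obtain ⟨M, hM⟩ := hσb
  refine SignedMeasure.eq_zero_of_restrict_posPart_eq_negPart measurableSet_Icc hsupp ?_
  refine Measure.ext_of_integral_sigmoid_strongDual_eq hσm hM hC hbot htop fun L a b => ?_
  exact sub_eq_zero.mp (hint L L.toLinearMap.isMultilinearPoly a b)

/-- every bounded Borel-measurable sigmoidal `σ` with `σ → 0` at `-∞` and
`σ → C ≠ 0` at `+∞` is discriminatory for the MPS feature class: if a finite signed
regular Borel measure `μ` on `[0,1]ⁿ` (realized as a signed measure on `ℝⁿ` vanishing
outside the cube, with regular Jordan parts) satisfies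
`∫ σ(λ p(x) + η) dμ(x) = 0` for all multilinear polynomials `p` and all `λ, η ∈ ℝ`,
then `μ = 0`. -/
theorem measurable_sigmoidal_discriminatory (n : ℕ) (σ : ℝ → ℝ)
    (hσm : Measurable σ) (hσb : ∃ M, ∀ t, |σ t| ≤ M) (C : ℝ) (hC : C ≠ 0)
    (hbot : Filter.Tendsto σ Filter.atBot (nhds 0))
    (htop : Filter.Tendsto σ Filter.atTop (nhds C))
    (μ : SignedMeasure (Fin n → ℝ))
    (hsupp : ∀ A : Set (Fin n → ℝ), MeasurableSet A →
      A ⊆ (Set.Icc (0 : Fin n → ℝ) 1)ᶜ → μ A = 0)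
    (hreg₁ : μ.toJordanDecomposition.posPart.Regular)
    (hreg₂ : μ.toJordanDecomposition.negPart.Regular)
    (hint : ∀ p : (Fin n → ℝ) → ℝ, IsMultilinearPoly p → ∀ lam eta : ℝ,
      (∫ x in Set.Icc (0 : Fin n → ℝ) 1, σ (lam * p x + eta)
          ∂μ.toJordanDecomposition.posPart)
        - (∫ x in Set.Icc (0 : Fin n → ℝ) 1, σ (lam * p x + eta)
          ∂μ.toJordanDecomposition.negPart) = 0) :
    μ = 0 :=
  measurable_sigmoidal_discriminatory_general n σ hσm hσb C hC hbot htop μ hsupp hint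
end

section
/- L¹ universal approximation by activated MPS: let σ : ℝ → ℝ be bounded and Borel measurable with σ(t) → 0 as t → −∞ and σ(t) → C as t → +∞, where C ≠ 0. Then the MPS network class M(σ) is dense in L¹([0,1]ⁿ) with respect to Lebesgue measure: for every f ∈ L¹([0,1]ⁿ) and every ε > 0 there exist L ∈ ℕ, coefficients c₁,…,c_L ∈ ℝ and multilinear polynomials p₁,…,p_L on ℝⁿ such that ∫_{[0,1]ⁿ} |Σ_{l=1}^{L} c_l σ(p_l(x)) − f(x)| dx < ε. -/
open MeasureTheory

/-!
Affine functions are multilinear, so it suffices to approximate by `Σ c_l σ(a_l ⬝ x + b_l)`.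
Let `W` be the `L¹` closure of the span of these ridge functions. The functions
`C⁻¹ σ(k (k (t - θ) - 1))` converge boundedly and pointwise to the step `[θ < t]`, so `W` contains
every `[θ < a ⬝ x]`; staircase sums of such steps converge boundedly to `φ (a ⬝ x)` for every
continuous `φ`, so `W` contains every `exp (a ⬝ x)`. These exponentials form a multiplicative
monoid separating points, so by Stone–Weierstrass their span is uniformly dense in `C([0,1]ⁿ)`,
and continuous functions are dense in `L¹`.
-/

open Filter Topology Matrix Finset

theorem isMultilinearPoly_iff_mem_span {n : ℕ} {p : (Fin n → ℝ) → ℝ} :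
    IsMultilinearPoly p ↔ p ∈ Submodule.span ℝ
      (Set.range fun (s : Fin n → Bool) (x : Fin n → ℝ) => ∏ i, if s i then x i else 1) := by
  rw [Submodule.mem_span_range_iff_exists_fun]
  refine exists_congr fun W => ?_
  rw [eq_comm, funext_iff]
  simp [Finset.sum_apply]

theorem isMultilinearPoly_dotProduct_add {n : ℕ} (a : Fin n → ℝ) (b : ℝ) :
    IsMultilinearPoly fun x => a ⬝ᵥ x + b := by
  classical
  set monomial := fun (s : Fin n → Bool) (x : Fin n → ℝ) => ∏ i, if s i then x i else 1
  have hmono : ∀ s, monomial s ∈ Submodule.span ℝ (Set.range monomial) :=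
    fun s => Submodule.subset_span ⟨s, rfl⟩
  have hsplit : (fun x => a ⬝ᵥ x + b) = ∑ i, a i • monomial (fun j => decide (j = i))
      + b • monomial fun _ => false := by
    funext x
    simp [monomial, dotProduct]
  rw [isMultilinearPoly_iff_mem_span, hsplit]
  exact add_mem (sum_mem fun i _ => Submodule.smul_mem _ _ (hmono _))
    (Submodule.smul_mem _ _ (hmono _))

section Classes

variable {α E : Type*} [MeasurableSpace α] {p : ENNReal} {μ : Measure α} [NormedAddCommGroup E]
  [NormedSpace ℝ E]

def aeFunctions (W : Submodule ℝ (Lp E p μ)) : Submodule ℝ (α → E) where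
  carrier := {f | ∃ F ∈ W, F =ᵐ[μ] f}
  add_mem' := fun ⟨F, hF, hFf⟩ ⟨G, hG, hGg⟩ =>
    ⟨F + G, W.add_mem hF hG, (Lp.coeFn_add F G).trans (hFf.add hGg)⟩
  zero_mem' := ⟨0, W.zero_mem, Lp.coeFn_zero E p μ⟩
  smul_mem' c _ := fun ⟨F, hF, hFf⟩ =>
    ⟨c • F, W.smul_mem c hF, (Lp.coeFn_smul c F).trans (hFf.const_smul c)⟩

variable (p μ) in
def lpClasses (P : Submodule ℝ (α → E)) : Submodule ℝ (Lp E p μ) where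
  carrier := {F | ∃ f ∈ P, F =ᵐ[μ] f}
  add_mem' := fun ⟨f, hf, hFf⟩ ⟨g, hg, hGg⟩ =>
    ⟨f + g, P.add_mem hf hg, (Lp.coeFn_add _ _).trans (hFf.add hGg)⟩
  zero_mem' := ⟨0, P.zero_mem, Lp.coeFn_zero E p μ⟩
  smul_mem' c _ := fun ⟨f, hf, hFf⟩ =>
    ⟨c • f, P.smul_mem c hf, (Lp.coeFn_smul c _).trans (hFf.const_smul c)⟩

theorem mem_of_ae_eq_mem_aeFunctions {W : Submodule ℝ (Lp E p μ)} {F : Lp E p μ} {f : α → E}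
    (hF : F =ᵐ[μ] f) (hf : f ∈ aeFunctions W) : F ∈ W :=
  let ⟨_, hG, hGf⟩ := hf
  Lp.ext (hGf.trans hF.symm) ▸ hG

theorem mem_aeFunctions_of_tendsto [IsFiniteMeasure μ] {W : Submodule ℝ (Lp E 1 μ)}
    (hW : IsClosed (W : Set (Lp E 1 μ))) {F : ℕ → α → E} {f : α → E} {M : ℝ}
    (hF : ∀ k, F k ∈ aeFunctions W) (hbound : ∀ k x, ‖F k x‖ ≤ M)
    (hlim : ∀ x, Tendsto (fun k => F k x) atTop (𝓝 (f x))) : f ∈ aeFunctions W := by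
  choose G hGW hGF using hF
  have hGb : ∀ k, ∀ᵐ x ∂μ, ‖G k x‖ ≤ M := fun k => (hGF k).mono fun x hx => hx ▸ hbound k x
  have hGlim : ∀ᵐ x ∂μ, Tendsto (fun k => G k x) atTop (𝓝 (f x)) := by
    filter_upwards [ae_all_iff.2 hGF] with x hx
    simpa only [hx] using hlim x
  have hfb : ∀ x, ‖f x‖ ≤ M := fun x => le_of_tendsto' (hlim x).norm fun k => hbound k x
  have hf : MemLp f 1 μ :=
    .of_bound (aestronglyMeasurable_of_tendsto_ae _ (fun k => Lp.aestronglyMeasurable (G k)) hGlim)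
      M (.of_forall hfb)
  refine ⟨hf.toLp f, hW.mem_of_tendsto (b := atTop) ?_ (.of_forall hGW), hf.coeFn_toLp⟩
  rw [Lp.tendsto_Lp_iff_tendsto_eLpNorm]
  simp_rw [eLpNorm_one_eq_lintegral_enorm, Pi.sub_apply, ← ofReal_norm]
  exact tendsto_lintegral_norm_of_dominated_convergence (fun k => Lp.aestronglyMeasurable (G k))
    (hasFiniteIntegral_const M) hGb hGlim

end Classes

theorem dist_toL1_eq_integral {α : Type*} [MeasurableSpace α] {μ : Measure α} {F : Lp ℝ 1 μ}
    {g f : α → ℝ} (hF : F =ᵐ[μ] g) (hf : Integrable f μ) :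
    dist F (hf.toL1 f) = ∫ x, |g x - f x| ∂μ := by
  rw [dist_eq_norm, L1.norm_eq_integral_norm]
  refine integral_congr_ae ?_
  filter_upwards [Lp.coeFn_sub F (hf.toL1 f), hF, hf.coeFn_toL1] with x hsub hg hf
  rw [hsub, Pi.sub_apply, hg, hf, Real.norm_eq_abs]

theorem isFiniteMeasure_comap_subtypeVal {β : Type*} [MeasurableSpace β] {ν : Measure β}
    {s : Set β} (hs : MeasurableSet s) (hνs : ν s ≠ ⊤) :
    IsFiniteMeasure (ν.comap ((↑) : s → β)) :=
  ⟨by rw [comap_subtype_coe_apply hs, Set.image_univ, Subtype.range_coe]; exact hνs.lt_top⟩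

theorem sum_range_sub_mul_ite_lt {A : Type*} [Ring A] {g : ℕ → A} {J N : ℕ} (hJ : J ≤ N) :
    ∑ j ∈ range N, (g (j + 1) - g j) * (if j < J then 1 else 0) = g J - g 0 := by
  rw [← sum_range_sub g J]
  simp_rw [mul_ite, mul_one, mul_zero]
  rw [← sum_filter]
  congr 1
  ext j
  simp only [mem_filter, mem_range]
  omega

noncomputable def gridPoint (R : ℝ) (k j : ℕ) : ℝ := -R + j / (k + 1)

noncomputable def staircase (φ : ℝ → ℝ) (R : ℝ) (k : ℕ) (v : ℝ) : ℝ :=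
  φ (gridPoint R k 0) + ∑ j ∈ range ⌈2 * R * (k + 1)⌉₊,
    (φ (gridPoint R k (j + 1)) - φ (gridPoint R k j)) * if gridPoint R k j < v then 1 else 0

theorem gridPoint_lt_iff {R v : ℝ} {k j : ℕ} :
    gridPoint R k j < v ↔ j < ⌈(v + R) * (k + 1)⌉₊ := by
  rw [Nat.lt_ceil, gridPoint, ← div_lt_iff₀ (by positivity)]
  constructor <;> intro h <;> linarith

theorem staircase_eq {φ : ℝ → ℝ} {R v : ℝ} (hv : |v| ≤ R) (k : ℕ) :
    staircase φ R k v = φ (gridPoint R k ⌈(v + R) * (k + 1)⌉₊) := by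
  have hJ : ⌈(v + R) * (k + 1)⌉₊ ≤ ⌈2 * R * (k + 1)⌉₊ :=
    Nat.ceil_mono (by gcongr; linarith [(abs_le.1 hv).2])
  simp_rw [staircase, gridPoint_lt_iff]
  rw [sum_range_sub_mul_ite_lt (g := fun j => φ (gridPoint R k j)) hJ]
  ring

theorem gridPoint_ceil_mem_Icc {R v : ℝ} (hv : -R ≤ v) (k : ℕ) :
    gridPoint R k ⌈(v + R) * (k + 1)⌉₊ ∈ Set.Icc v (v + 1 / (k + 1)) := by
  have hk : (0 : ℝ) < k + 1 := by positivity
  have h0 : 0 ≤ (v + R) * (k + 1) := by nlinarith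
  have hle := Nat.le_ceil ((v + R) * (k + 1))
  have hlt := Nat.ceil_lt_add_one h0
  constructor
  · rw [gridPoint, le_neg_add_iff_add_le, le_div_iff₀ hk]
    linarith
  · rw [gridPoint, neg_add_le_iff_le_add, div_le_iff₀ hk]
    field_simp
    nlinarith

theorem tendsto_staircase {φ : ℝ → ℝ} (hφ : Continuous φ) {R v : ℝ} (hv : |v| ≤ R) :
    Tendsto (fun k => staircase φ R k v) atTop (𝓝 (φ v)) := by
  have hmem := gridPoint_ceil_mem_Icc (abs_le.1 hv).1
  simp_rw [staircase_eq hv]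
  refine (hφ.tendsto v).comp (tendsto_of_tendsto_of_tendsto_of_le_of_le tendsto_const_nhds ?_
    (fun k => (hmem k).1) (fun k => (hmem k).2))
  simpa using tendsto_one_div_add_atTop_nhds_zero_nat.const_add v

theorem exists_bound_staircase {φ : ℝ → ℝ} (hφ : Continuous φ) (R : ℝ) :
    ∃ B, ∀ k v, |v| ≤ R → |staircase φ R k v| ≤ B := by
  obtain ⟨B, hB⟩ :=
    (isCompact_Icc (a := -R) (b := R + 1)).exists_bound_of_continuousOn hφ.continuousOn
  refine ⟨B, fun k v hv => ?_⟩
  have hmem := gridPoint_ceil_mem_Icc (abs_le.1 hv).1 k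
  have hmesh : 1 / ((k : ℝ) + 1) ≤ 1 := by
    rw [div_le_one (by positivity)]
    linarith [k.cast_nonneg (α := ℝ)]
  rw [staircase_eq hv]
  exact hB _ ⟨by linarith [hmem.1, (abs_le.1 hv).1], by linarith [hmem.2, (abs_le.1 hv).2]⟩

section Activation

variable {α : Type*} [MeasurableSpace α] {μ : Measure α} [IsFiniteMeasure μ] {σ : ℝ → ℝ}
  {M C : ℝ} {W : Submodule ℝ (Lp ℝ 1 μ)} {u : α → ℝ}

theorem tendsto_natCast_mul_mul_sub_one_atTop {δ : ℝ} (hδ : 0 < δ) :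
    Tendsto (fun k : ℕ => (k : ℝ) * (k * δ - 1)) atTop atTop :=
  tendsto_natCast_atTop_atTop.atTop_mul_atTop₀
    (tendsto_atTop_add_const_right _ _ (tendsto_natCast_atTop_atTop.atTop_mul_const hδ))

theorem step_mem_aeFunctions (hW : IsClosed (W : Set (Lp ℝ 1 μ))) (hσ : ∀ t, |σ t| ≤ M)
    (hC : C ≠ 0) (hbot : Tendsto σ atBot (𝓝 0)) (htop : Tendsto σ atTop (𝓝 C))
    (hu : ∀ c d, (fun x => σ (c * u x + d)) ∈ aeFunctions W) (θ : ℝ) :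
    (fun x => if θ < u x then (1 : ℝ) else 0) ∈ aeFunctions W := by
  -- the shift by `-k` makes the limit exist also where `u x = θ`
  set F : ℕ → α → ℝ := fun k x => C⁻¹ * σ (k * (k * (u x - θ) - 1))
  have hF : ∀ k, F k ∈ aeFunctions W := by
    intro k
    convert (aeFunctions W).smul_mem C⁻¹ (hu (k * k) (-(k * k * θ) - k)) using 1
    funext x
    simp only [F, Pi.smul_apply, smul_eq_mul]
    ring_nf
  refine mem_aeFunctions_of_tendsto hW hF (M := |C⁻¹| * M) (fun k x => ?_) (fun x => ?_)
  · rw [Real.norm_eq_abs, abs_mul]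
    exact mul_le_mul_of_nonneg_left (hσ _) (abs_nonneg _)
  · by_cases hx : θ < u x
    · rw [if_pos hx, ← inv_mul_cancel₀ hC]
      exact (htop.comp (tendsto_natCast_mul_mul_sub_one_atTop (sub_pos.2 hx))).const_mul _
    · rw [if_neg hx, ← mul_zero C⁻¹]
      refine (hbot.comp (tendsto_atBot_mono (fun k => ?_)
        (tendsto_neg_atBot_iff.2 tendsto_natCast_atTop_atTop))).const_mul _
      have hδ : 0 ≤ θ - u x := by linarith [not_lt.1 hx]
      have hk : (0 : ℝ) ≤ k := k.cast_nonneg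
      nlinarith [mul_nonneg hk (mul_nonneg hk hδ)]

theorem comp_mem_aeFunctions_of_steps (hW : IsClosed (W : Set (Lp ℝ 1 μ))) {R : ℝ}
    (hR : ∀ x, |u x| ≤ R)
    (hstep : ∀ θ, (fun x => if θ < u x then (1 : ℝ) else 0) ∈ aeFunctions W)
    {φ : ℝ → ℝ} (hφ : Continuous φ) : (fun x => φ (u x)) ∈ aeFunctions W := by
  obtain ⟨B, hB⟩ := exists_bound_staircase hφ R
  refine mem_aeFunctions_of_tendsto hW (F := fun k x => staircase φ R k (u x)) (M := B)
    (fun k => ?_) (fun k x => hB k _ (hR x)) (fun x => tendsto_staircase hφ (hR x))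
  have hone : (fun x => if -R - 1 < u x then (1 : ℝ) else 0) = 1 := by
    funext x
    rw [if_pos (by linarith [(abs_le.1 (hR x)).1]), Pi.one_apply]
  have hsplit : (fun x => staircase φ R k (u x)) = φ (gridPoint R k 0) • (1 : α → ℝ) +
      ∑ j ∈ range ⌈2 * R * (k + 1)⌉₊, (φ (gridPoint R k (j + 1)) - φ (gridPoint R k j)) •
        fun x => if gridPoint R k j < u x then (1 : ℝ) else 0 := by
    funext x
    simp [staircase, Finset.sum_apply]
  rw [hsplit, ← hone]
  exact add_mem (Submodule.smul_mem _ _ (hstep _))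
    (sum_mem fun j _ => Submodule.smul_mem _ _ (hstep _))

end Activation

section Compact

variable {σ : ℝ → ℝ} {M C : ℝ} {n : ℕ} {K : Set (Fin n → ℝ)} {μ : Measure K}

variable (σ μ) in
noncomputable def ridgeSpan : Submodule ℝ (Lp ℝ 1 μ) :=
  lpClasses 1 μ (Submodule.span ℝ
    (Set.range fun (ab : (Fin n → ℝ) × ℝ) (x : K) => σ (ab.1 ⬝ᵥ x + ab.2)))

theorem exists_sum_of_mem_ridgeSpan {F : Lp ℝ 1 μ} (hF : F ∈ ridgeSpan σ μ) :
    ∃ (L : ℕ) (c : Fin L → ℝ) (a : Fin L → Fin n → ℝ) (b : Fin L → ℝ),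
      F =ᵐ[μ] fun x => ∑ l, c l * σ (a l ⬝ᵥ x + b l) := by
  obtain ⟨g, hg, hFg⟩ := hF
  obtain ⟨L, c, v, rfl⟩ := Submodule.mem_span_set'.1 hg
  choose ab hab using fun l => (v l).2
  refine ⟨L, c, fun l => (ab l).1, fun l => (ab l).2, hFg.trans (.of_eq ?_)⟩
  funext x
  simp [Finset.sum_apply, ← hab]

theorem ridge_mem_aeFunctions [IsFiniteMeasure μ] (hσm : Measurable σ) (hσ : ∀ t, |σ t| ≤ M)
    (a : Fin n → ℝ) (b : ℝ) :
    (fun x : K => σ (a ⬝ᵥ x + b)) ∈ aeFunctions (ridgeSpan σ μ).topologicalClosure := by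
  have hmem : MemLp (fun x : K => σ (a ⬝ᵥ x + b)) 1 μ :=
    .of_bound (hσm.comp (by fun_prop)).aestronglyMeasurable M (.of_forall fun x => hσ _)
  exact ⟨hmem.toLp _, Submodule.le_topologicalClosure _
    ⟨_, Submodule.subset_span ⟨(a, b), rfl⟩, hmem.coeFn_toLp⟩, hmem.coeFn_toLp⟩

theorem comp_dotProduct_mem_aeFunctions [CompactSpace K] [IsFiniteMeasure μ]
    (hσm : Measurable σ) (hσ : ∀ t, |σ t| ≤ M) (hC : C ≠ 0) (hbot : Tendsto σ atBot (𝓝 0))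
    (htop : Tendsto σ atTop (𝓝 C)) (a : Fin n → ℝ) {φ : ℝ → ℝ} (hφ : Continuous φ) :
    (fun x : K => φ (a ⬝ᵥ x)) ∈ aeFunctions (ridgeSpan σ μ).topologicalClosure := by
  let u : C(K, ℝ) := ⟨fun x => a ⬝ᵥ x, by fun_prop⟩
  have hW := (ridgeSpan σ μ).isClosed_topologicalClosure
  refine comp_mem_aeFunctions_of_steps hW (u := u) u.norm_coe_le_norm
    (step_mem_aeFunctions hW hσ hC hbot htop (fun c d => ?_)) hφ
  simpa [u, smul_dotProduct] using ridge_mem_aeFunctions hσm hσ (c • a) d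

variable (n K) in
noncomputable def expDotProduct : Submonoid C(K, ℝ) where
  carrier := Set.range fun a : Fin n → ℝ => ⟨fun x => Real.exp (a ⬝ᵥ x), by fun_prop⟩
  mul_mem' := by
    rintro _ _ ⟨a, rfl⟩ ⟨b, rfl⟩
    exact ⟨a + b, by ext x; simp [add_dotProduct, Real.exp_add]⟩
  one_mem' := ⟨0, by ext x; simp⟩

theorem separatesPoints_adjoin_expDotProduct :
    (Algebra.adjoin ℝ (expDotProduct n K : Set C(K, ℝ))).SeparatesPoints := by
  intro x y hxy
  obtain ⟨i, hi⟩ := Function.ne_iff.1 (Subtype.coe_ne_coe.2 hxy)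
  refine ⟨_, ⟨_, Algebra.subset_adjoin ⟨Pi.single i 1, rfl⟩, rfl⟩, ?_⟩
  simpa [single_dotProduct] using hi

theorem ridgeSpan_dense [CompactSpace K] [IsFiniteMeasure μ] (hσm : Measurable σ)
    (hσ : ∀ t, |σ t| ≤ M) (hC : C ≠ 0) (hbot : Tendsto σ atBot (𝓝 0))
    (htop : Tendsto σ atTop (𝓝 C)) : Dense (ridgeSpan σ μ : Set (Lp ℝ 1 μ)) := by
  set W := (ridgeSpan σ μ).topologicalClosure
  have hW : IsClosed (W : Set (Lp ℝ 1 μ)) := (ridgeSpan σ μ).isClosed_topologicalClosure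
  let toL1 : C(K, ℝ) →L[ℝ] Lp ℝ 1 μ := ContinuousMap.toLp 1 μ ℝ
  let T := W.comap (toL1 : C(K, ℝ) →ₗ[ℝ] Lp ℝ 1 μ)
  have hexp : Subalgebra.toSubmodule (Algebra.adjoin ℝ (expDotProduct n K : Set C(K, ℝ))) ≤ T := by
    rw [Algebra.adjoin_eq_span, Submonoid.closure_eq, Submodule.span_le]
    rintro _ ⟨a, rfl⟩
    exact mem_of_ae_eq_mem_aeFunctions (f := fun x : K => Real.exp (a ⬝ᵥ x))
      (ContinuousMap.coeFn_toLp _ _)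
      (comp_dotProduct_mem_aeFunctions hσm hσ hC hbot htop a Real.continuous_exp)
  have hT : Set.range toL1 ⊆ W := by
    rintro _ ⟨g, rfl⟩
    have hg : g ∈ closure (Algebra.adjoin ℝ (expDotProduct n K : Set C(K, ℝ)) : Set C(K, ℝ)) := by
      rw [← Subalgebra.topologicalClosure_coe,
        ContinuousMap.subalgebra_topologicalClosure_eq_top_of_separatesPoints _
          separatesPoints_adjoin_expDotProduct]
      trivial
    exact closure_minimal (SetLike.coe_subset_coe.2 hexp) (hW.preimage toL1.continuous) hg
  rw [dense_iff_closure_eq, ← Submodule.topologicalClosure_coe, Set.eq_univ_iff_forall]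
  exact fun F => closure_minimal hT hW
    ((ContinuousMap.toLp_denseRange ℝ μ ℝ ENNReal.one_ne_top).closure_range ▸ Set.mem_univ F)

end Compact

/-- `L¹` universal approximation by activated MPS. For any bounded
Borel-measurable sigmoidal `σ` with `σ → 0` at `-∞` and `σ → C ≠ 0` at `+∞`, the class
`{x ↦ Σ_l c_l σ(p_l x)}` (with `p_l` multilinear polynomials) is dense in
`L¹([0,1]ⁿ)` with respect to Lebesgue measure. -/
theorem activated_mps_dense_in_L1 (n : ℕ) (σ : ℝ → ℝ)
    (hσm : Measurable σ) (hσb : ∃ M, ∀ t, |σ t| ≤ M) (C : ℝ) (hC : C ≠ 0)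
    (hbot : Filter.Tendsto σ Filter.atBot (nhds 0))
    (htop : Filter.Tendsto σ Filter.atTop (nhds C))
    (f : (Fin n → ℝ) → ℝ)
    (hf : IntegrableOn f (Set.Icc 0 1) volume)
    (ε : ℝ) (hε : 0 < ε) :
    ∃ (L : ℕ) (c : Fin L → ℝ) (p : Fin L → (Fin n → ℝ) → ℝ),
      (∀ l, IsMultilinearPoly (p l)) ∧
      (∫ x in Set.Icc (0 : Fin n → ℝ) 1,
          |(∑ l : Fin L, c l * σ (p l x)) - f x|) < ε := by
  obtain ⟨M, hM⟩ := hσb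
  have := isFiniteMeasure_comap_subtypeVal (ν := volume) measurableSet_Icc
    (isCompact_Icc (a := (0 : Fin n → ℝ)) (b := 1)).measure_lt_top.ne
  have hf' := (integrableOn_iff_comap_subtypeVal measurableSet_Icc).1 hf
  obtain ⟨F, hFV, hFf⟩ := (ridgeSpan_dense hσm hM hC hbot htop).exists_dist_lt (hf'.toL1 _) hε
  obtain ⟨L, c, a, b, hF⟩ := exists_sum_of_mem_ridgeSpan hFV
  refine ⟨L, c, fun l x => a l ⬝ᵥ x + b l, fun l => isMultilinearPoly_dotProduct_add _ _, ?_⟩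
  rw [dist_comm, dist_toL1_eq_integral hF hf'] at hFf
  rw [← integral_subtype_comap measurableSet_Icc]
  exact hFf
end
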